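/- Let Γ be a finite simple graph and let Γ' be obtained from Γ by a sequence of n doubling moves. Then the right-angled Coxeter group W_{Γ'} is isomorphic to a subgroup of W_Γ of index 2^n; in particular W_{Γ'} is isomorphic to a finite-index subgroup of W_Γ. -/

import Mathlib

open SimpleGraph

/-! ### Right-angled Coxeter groups -/

/-- The relators of the right-angled Coxeter group of a graph `G`: the square of each
generator, and a commuting relator `s * t * (t * s)⁻¹` for each edge of `G`. -/
def racgRels {V : Type} (G : SimpleGraph V) : Set (FreeGroup V) :=
  {r | (∃ s : V, r = FreeGroup.of s * FreeGroup.of s) ∨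
    (∃ s t : V, G.Adj s t ∧
      r = (FreeGroup.of s * FreeGroup.of t) * (FreeGroup.of t * FreeGroup.of s)⁻¹)}

/-- The right-angled Coxeter group of a graph. -/
abbrev RACG {V : Type} (G : SimpleGraph V) := PresentedGroup (racgRels G)

/-! ### The double of a graph over a vertex -/

/-- Vertices of the double of `G` over `v`: one vertex for each vertex of the link of `v`,
and a pair of vertices for each vertex outside the closed star of `v`. -/
def DoubleVert {V : Type} (G : SimpleGraph V) (v : V) : Type :=
  {u : V // G.Adj v u} ⊕ ({u : V // u ≠ v ∧ ¬ G.Adj v u} × Bool)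

namespace DoubleVert

/-- The projection of a vertex of the double to the original graph. -/
def toV {V : Type} {G : SimpleGraph V} {v : V} : DoubleVert G v → V :=
  Sum.elim Subtype.val fun p => p.1.1

/-- The copy (none for link vertices) in which a vertex of the double lives. -/
def copy {V : Type} {G : SimpleGraph V} {v : V} : DoubleVert G v → Option Bool :=
  Sum.elim (fun _ => none) fun p => some p.2

instance {V : Type} [Finite V] {G : SimpleGraph V} {v : V} : Finite (DoubleVert G v) := by
  unfold DoubleVert; infer_instance

end DoubleVert

/-- The double `D_v G` of a graph `G` over the vertex `v`: two copies of `G` minus the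
open star of `v`, glued along the link of `v`. -/
def Double {V : Type} (G : SimpleGraph V) (v : V) : SimpleGraph (DoubleVert G v) where
  Adj a b := G.Adj a.toV b.toV ∧ (a.copy = none ∨ b.copy = none ∨ a.copy = b.copy)
  symm := by
    constructor
    rintro a b ⟨h1, h2⟩
    refine ⟨h1.symm, ?_⟩
    tauto
  loopless := ⟨fun a h => G.loopless.irrefl _ h.1⟩

/-! ### Bundled finite graphs, doubling moves, and subdivisions -/

/-- A bundled finite simple graph. -/
structure FinGraph : Type 1 where
  V : Type
  finite : Finite V
  graph : SimpleGraph V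

attribute [instance] FinGraph.finite

/-- `H` is obtained from `G` by doubling over some vertex (up to isomorphism). -/
def DoubleMove (G H : FinGraph) : Prop :=
  ∃ v : G.V, Nonempty (H.graph ≃g Double G.graph v)

/-- `DoublingSeq n G H` : `H` is obtained from `G` by a sequence of `n` doubling moves. -/
inductive DoublingSeq : ℕ → FinGraph → FinGraph → Prop
  | refl (G : FinGraph) : DoublingSeq 0 G G
  | step {n : ℕ} {G G' G'' : FinGraph} :
      DoublingSeq n G G' → DoubleMove G' G'' → DoublingSeq (n + 1) G G''

/-- The graph obtained from `G` by subdividing the edge between `u` and `w`: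
the new vertex is `none`. -/
def subdivideEdge {V : Type} (G : SimpleGraph V) (u w : V) : SimpleGraph (Option V) where
  Adj a b :=
    match a, b with
    | some a, some b => G.Adj a b ∧ ¬(a = u ∧ b = w) ∧ ¬(a = w ∧ b = u)
    | some a, none => a = u ∨ a = w
    | none, some b => b = u ∨ b = w
    | none, none => False
  symm := by
    constructor
    rintro (_ | a) (_ | b) h
    · exact h
    · exact h
    · exact h
    · exact ⟨h.1.symm, fun hc => h.2.2 ⟨hc.2, hc.1⟩, fun hc => h.2.1 ⟨hc.2, hc.1⟩⟩
  loopless := by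
    constructor
    rintro (_ | a) h
    · exact h
    · exact G.loopless.irrefl a h.1

/-- One subdivision step between bundled graphs. -/
def SubdivStep (G H : FinGraph) : Prop :=
  ∃ u w : G.V, G.graph.Adj u w ∧ Nonempty (H.graph ≃g subdivideEdge G.graph u w)

/-- `G` is obtained from `H` by a finite (possibly empty) sequence of edge subdivisions. -/
def IsSubdivisionOf (H G : FinGraph) : Prop := Relation.ReflTransGen SubdivStep H G

/-- The complete bipartite graph `K_{3,3}` as a bundled graph. -/
def K33Graph : FinGraph := ⟨Fin 3 ⊕ Fin 3, inferInstance, completeBipartiteGraph (Fin 3) (Fin 3)⟩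

/-- The complete graph `K_5` as a bundled graph. -/
def K5Graph : FinGraph := ⟨Fin 5, inferInstance, completeGraph (Fin 5)⟩

/-- The subgraph `Λ` of `G` is (isomorphic to) a subdivision of the bundled graph `H`. -/
def IsSubdivCopy (H : FinGraph) {V : Type} (G : SimpleGraph V) (Λ : G.Subgraph) : Prop :=
  ∃ H' : FinGraph, IsSubdivisionOf H H' ∧ Nonempty (H'.graph ≃g Λ.coe)

/-- `G` contains a subgraph which is a subdivision of `H`. -/
def ContainsSubdivOf (H : FinGraph) {V : Type} (G : SimpleGraph V) : Prop :=
  ∃ Λ : G.Subgraph, IsSubdivCopy H G Λ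

/-- `Λ` is a `K_{3,3}` subdivision in `G`. -/
def IsK33Sub {V : Type} (G : SimpleGraph V) (Λ : G.Subgraph) : Prop := IsSubdivCopy K33Graph G Λ

/-- `Λ` is a `K_5` subdivision in `G`. -/
def IsK5Sub {V : Type} (G : SimpleGraph V) (Λ : G.Subgraph) : Prop := IsSubdivCopy K5Graph G Λ

/-! ### Essential vertices, branches, bad edges -/

/-- The valence of `v` in the subgraph `Λ`. -/
noncomputable def essDeg {V : Type} {G : SimpleGraph V} (Λ : G.Subgraph) (v : V) : ℕ :=
  (Λ.neighborSet v).ncard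

/-- A vertex is `Λ`-essential if its valence in `Λ` is at least 3. -/
def Essential {V : Type} {G : SimpleGraph V} (Λ : G.Subgraph) (v : V) : Prop := 3 ≤ essDeg Λ v

/-- A vertex is `Λ`-non-essential if its valence in `Λ` is 2. -/
def NonEssential {V : Type} {G : SimpleGraph V} (Λ : G.Subgraph) (v : V) : Prop := essDeg Λ v = 2

/-- A branch of `Λ`: an embedded path in `Λ` between `Λ`-essential vertices whose interior
contains no `Λ`-essential vertex. -/
structure IsBranch {V : Type} {G : SimpleGraph V} (Λ : G.Subgraph) {s t : V}
    (p : G.Walk s t) : Prop where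
  isPath : p.IsPath
  pos : 0 < p.length
  mem_edges : ∀ e ∈ p.edges, e ∈ Λ.edgeSet
  ess_fst : Essential Λ s
  ess_snd : Essential Λ t
  interior : ∀ v ∈ p.support, v ≠ s → v ≠ t → ¬ Essential Λ v

/-- A bad edge of `Λ`: an edge of `G` with both endpoints in `Λ` which is not an edge of `Λ`. -/
def IsBadEdge {V : Type} (G : SimpleGraph V) (Λ : G.Subgraph) (e : Sym2 V) : Prop :=
  e ∈ G.edgeSet ∧ (∀ v ∈ e, v ∈ Λ.verts) ∧ e ∉ Λ.edgeSet

/-- The set of bad edges of `Λ`. -/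
def badEdgeSet {V : Type} (G : SimpleGraph V) (Λ : G.Subgraph) : Set (Sym2 V) :=
  {e | IsBadEdge G Λ e}

/-- `B(Λ)`, the number of bad edges of `Λ`. -/
noncomputable def badCount {V : Type} (G : SimpleGraph V) (Λ : G.Subgraph) : ℕ :=
  (badEdgeSet G Λ).ncard

/-- The number of edges of a subgraph. -/
noncomputable def numEdges {V : Type} {G : SimpleGraph V} (Λ : G.Subgraph) : ℕ :=
  Λ.edgeSet.ncard

/-- `Λ` is a `K_{3,3}` subdivision which is shortest among all `K_{3,3}` subdivisions in `G`
having at most `B(Λ)` bad edges. -/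
def ShortestK33 {V : Type} (G : SimpleGraph V) (Λ : G.Subgraph) : Prop :=
  IsK33Sub G Λ ∧ ∀ Λ₂ : G.Subgraph, IsK33Sub G Λ₂ → badCount G Λ₂ ≤ badCount G Λ →
    numEdges Λ ≤ numEdges Λ₂

/-- A vertex partition `{a,b,c}`, `{x,y,z}` for a `K_{3,3}` subdivision `Λ`: six distinct
vertices which are exactly the `Λ`-essential vertices, with a branch of `Λ` joining each of
`a, b, c` to each of `x, y, z`. -/
structure IsVertexPartition {V : Type} {G : SimpleGraph V} (Λ : G.Subgraph)
    (a b c x y z : V) : Prop where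
  nodup : ([a, b, c, x, y, z] : List V).Nodup
  ess_iff : ∀ v, Essential Λ v ↔ v ∈ ({a, b, c, x, y, z} : Set V)
  branches : ∀ s ∈ ({a, b, c} : Set V), ∀ t ∈ ({x, y, z} : Set V),
    ∃ p : G.Walk s t, IsBranch Λ p

/-- `Λ` is an induced subgraph of `G`. -/
def IsInducedSub {V : Type} (G : SimpleGraph V) (Λ : G.Subgraph) : Prop :=
  ∀ e ∈ G.edgeSet, (∀ v ∈ e, v ∈ Λ.verts) → e ∈ Λ.edgeSet

/-- The induced subgraph on `Λ` consists of `Λ` plus exactly the edges `x-y` and `y-z`. -/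
def FormTwoExtra {V : Type} (G : SimpleGraph V) (Λ : G.Subgraph) (x y z : V) : Prop :=
  badEdgeSet G Λ = {s(x, y), s(y, z)}

/-- The induced subgraph on `Λ` consists of `Λ` plus exactly the edges `x-y`, `y-z`, `a-b`,
`b-c`, and the branches `[a,y]`, `[c,y]`, `[b,x]`, `[b,z]` are single edges. -/
def FormFourExtra {V : Type} (G : SimpleGraph V) (Λ : G.Subgraph) (a b c x y z : V) : Prop :=
  badEdgeSet G Λ = {s(x, y), s(y, z), s(a, b), s(b, c)} ∧
    (∀ p : G.Walk a y, IsBranch Λ p → p.length = 1) ∧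
    (∀ p : G.Walk c y, IsBranch Λ p → p.length = 1) ∧
    (∀ p : G.Walk b x, IsBranch Λ p → p.length = 1) ∧
    (∀ p : G.Walk b z, IsBranch Λ p → p.length = 1)

/-- `Λ` is a `K_{3,3}` subdivision which is either induced, or induces one of the two special
graphs of Dani–Haulmark–Walsh. -/
def GoodK33Outcome {V : Type} (G : SimpleGraph V) (Λ : G.Subgraph) : Prop :=
  IsK33Sub G Λ ∧ (IsInducedSub G Λ ∨
    ∃ a b c x y z : V, IsVertexPartition Λ a b c x y z ∧
      (FormTwoExtra G Λ x y z ∨ FormFourExtra G Λ a b c x y z))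

/-! ### Möbius ladders and separating sets -/

/-- The Möbius ladder `M_n`, on vertex set `ZMod (2 * n)`: the cycle edges `i — i+1`
together with the rungs `i — i+n`. -/
def MobiusLadder (n : ℕ) : SimpleGraph (ZMod (2 * n)) where
  Adj i j := i ≠ j ∧ (i = j + 1 ∨ j = i + 1 ∨ i = j + (n : ZMod (2 * n)))
  symm := by
    constructor
    rintro i j ⟨hne, h⟩
    refine ⟨hne.symm, ?_⟩
    rcases h with h | h | h
    · exact Or.inr (Or.inl h)
    · exact Or.inl h
    · refine Or.inr (Or.inr ?_)
      have hnn : (n : ZMod (2 * n)) + (n : ZMod (2 * n)) = 0 := by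
        have h2 : ((2 * n : ℕ) : ZMod (2 * n)) = 0 := ZMod.natCast_self _
        push_cast at h2
        linear_combination h2
      rw [h, add_assoc, hnn, add_zero]
  loopless := ⟨fun i h => h.1 rfl⟩

/-- `S` separates `G` if deleting `S` yields a disconnected graph. -/
def Separates {V : Type} (G : SimpleGraph V) (S : Set V) : Prop :=
  ¬ (G.induce Sᶜ).Connected

/-!
The swap of the two copies of `Γ ∖ st(v)` is a graph automorphism of `D_vΓ`, hence induces an
involution `σ` of `W_{D_vΓ}`. Sending `v` to the generator of `{±1}` and every other vertex `u`
to the vertex over `u` in the link or in the first copy gives an isomorphism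
`W_Γ ≃ W_{D_vΓ} ⋊_σ {±1}`; its inverse sends a second-copy vertex over `u` to `v u v`.
So `W_{D_vΓ}` is the kernel of the projection to `{±1}`, of index 2, and indices multiply
along a sequence of doublings.
-/

section UnitsInt

variable {M : Type*} [Group M]

def unitsIntLift (x : M) (hx : x * x = 1) : ℤˣ →* M where
  toFun u := if u = 1 then 1 else x
  map_one' := if_pos rfl
  map_mul' u w := by
    rcases Int.units_eq_one_or u with rfl | rfl <;> rcases Int.units_eq_one_or w with rfl | rfl <;>
      simp [hx]

@[simp]
lemma unitsIntLift_neg_one (x : M) (hx : x * x = 1) : unitsIntLift x hx (-1) = x := by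
  simp [unitsIntLift]

lemma unitsInt_hom_ext {f g : ℤˣ →* M} (h : f (-1) = g (-1)) : f = g :=
  MonoidHom.ext fun u => by rcases Int.units_eq_one_or u with rfl | rfl <;> simp [h]

end UnitsInt

lemma SemidirectProduct.exists_index_eq_card_of_mulEquiv {G N C : Type*} [Group G] [Group N]
    [Group C] {φ : C →* MulAut N} (e : G ≃* N ⋊[φ] C) :
    ∃ H : Subgroup G, H.index = Nat.card C ∧ Nonempty (N ≃* H) := by
  refine ⟨inl.range.map (e.symm : N ⋊[φ] C →* G), ?_,
    ⟨(MonoidHom.ofInjective inl_injective).trans (e.symm.subgroupMap _)⟩⟩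
  rw [Subgroup.index_map_equiv, range_inl_eq_ker_rightHom, Subgroup.index_ker,
    MonoidHom.range_eq_top.2 rightHom_surjective, Subgroup.card_top]

lemma Subgroup.exists_index_mul_of_mulEquiv_subgroup {G H K : Type*} [Group G] [Group H]
    [Group K] {a b : ℕ} (hGH : ∃ A : Subgroup G, A.index = a ∧ Nonempty (H ≃* A))
    (hHK : ∃ B : Subgroup H, B.index = b ∧ Nonempty (K ≃* B)) :
    ∃ C : Subgroup G, C.index = b * a ∧ Nonempty (K ≃* C) := by
  obtain ⟨A, rfl, ⟨eA⟩⟩ := hGH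
  obtain ⟨B, rfl, ⟨eB⟩⟩ := hHK
  refine ⟨(B.map (eA : H →* A)).map A.subtype, ?_, ⟨eB.trans ((eA.subgroupMap B).trans
    ((B.map (eA : H →* A)).equivMapOfInjective _ A.subtype_injective))⟩⟩
  rw [Subgroup.index_map_subtype, Subgroup.index_map_equiv]

lemma SemidirectProduct.commute_inr_inl_of_apply_eq {N C : Type*} [Group N] [Group C]
    {φ : C →* MulAut N} {g : C} {n : N} (h : φ g n = n) :
    Commute (inr g : N ⋊[φ] C) (inl n) := by
  ext <;> simp [h]

namespace RACG

open PresentedGroup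

variable {V W : Type} {G : SimpleGraph V}

lemma of_mul_self (s : V) : (of s : RACG G) * of s = 1 := by
  have := one_of_mem (rels := racgRels G) (Or.inl ⟨s, rfl⟩)
  rwa [map_mul] at this

lemma commute_of_adj {s t : V} (h : G.Adj s t) : Commute (of s : RACG G) (of t) := by
  have := one_of_mem (rels := racgRels G) (Or.inr ⟨s, t, h, rfl⟩)
  rwa [map_mul, map_inv, map_mul, map_mul, mul_inv_eq_one] at this

def lift {M : Type*} [Group M] (f : V → M) (hsq : ∀ s, f s * f s = 1)
    (hadj : ∀ ⦃s t⦄, G.Adj s t → Commute (f s) (f t)) : RACG G →* M :=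
  toGroup (rels := racgRels G) (f := f) <| by
    rintro r (⟨s, rfl⟩ | ⟨s, t, hst, rfl⟩)
    · simpa only [map_mul, FreeGroup.lift_apply_of] using hsq s
    · simp only [map_mul, map_inv, FreeGroup.lift_apply_of]
      exact mul_inv_eq_one.2 (hadj hst).eq

@[simp]
lemma lift_of {M : Type*} [Group M] (f : V → M) (hsq : ∀ s, f s * f s = 1)
    (hadj : ∀ ⦃s t⦄, G.Adj s t → Commute (f s) (f t)) (s : V) :
    lift f hsq hadj (of s) = f s :=
  toGroup.of _

lemma hom_ext {M : Type*} [Group M] {f g : RACG G →* M} (h : ∀ s, f (of s) = g (of s)) :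
    f = g :=
  PresentedGroup.ext h

def congr {G' : SimpleGraph W} (e : G ≃g G') : RACG G ≃* RACG G' :=
  MonoidHom.toMulEquiv
    (lift (fun s => of (e s)) (fun _ => of_mul_self _)
      fun _ _ h => commute_of_adj (e.map_adj_iff.2 h))
    (lift (fun s => of (e.symm s)) (fun _ => of_mul_self _)
      fun _ _ h => commute_of_adj (e.symm.map_adj_iff.2 h))
    (hom_ext fun s => by simp) (hom_ext fun s => by simp)

@[simp]
lemma congr_of {G' : SimpleGraph W} (e : G ≃g G') (s : V) : congr e (of s) = of (e s) := by
  simp [congr]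

end RACG

namespace DoubleVert

variable {V : Type} {G : SimpleGraph V} {v : V}

open Classical in
noncomputable def ofV (u : V) (hu : u ≠ v) : DoubleVert G v :=
  if h : G.Adj v u then .inl ⟨u, h⟩ else .inr (⟨u, hu, h⟩, false)

lemma ofV_of_adj {u : V} (hu : u ≠ v) (h : G.Adj v u) : ofV u hu = .inl ⟨u, h⟩ := by
  unfold ofV
  exact dif_pos h

lemma ofV_of_not_adj {u : V} (hu : u ≠ v) (h : ¬ G.Adj v u) :
    ofV u hu = .inr (⟨u, hu, h⟩, false) := by
  unfold ofV
  exact dif_neg h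

lemma toV_ofV (u : V) (hu : u ≠ v) : (ofV u hu : DoubleVert G v).toV = u := by
  by_cases h : G.Adj v u
  · rw [ofV_of_adj hu h]; rfl
  · rw [ofV_of_not_adj hu h]; rfl

lemma copy_ofV_ne (u : V) (hu : u ≠ v) : (ofV u hu : DoubleVert G v).copy ≠ some true := by
  by_cases h : G.Adj v u
  · rw [ofV_of_adj hu h]; nofun
  · rw [ofV_of_not_adj hu h]; nofun

def swap : DoubleVert G v → DoubleVert G v :=
  Sum.map id (Prod.map id not)

lemma swap_involutive : Function.Involutive (swap : DoubleVert G v → DoubleVert G v) := by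
  rintro (_ | ⟨_, _ | _⟩) <;> rfl

lemma toV_swap (a : DoubleVert G v) : a.swap.toV = a.toV := by
  rcases a with _ | ⟨_, _⟩ <;> rfl

lemma copy_swap (a : DoubleVert G v) : a.swap.copy = a.copy.map not := by
  rcases a with _ | ⟨_, _⟩ <;> rfl

end DoubleVert

namespace Double

variable {V : Type} {G : SimpleGraph V} {v : V}

lemma adj_iff {a b : DoubleVert G v} : (Double G v).Adj a b ↔
    G.Adj a.toV b.toV ∧ (a.copy = none ∨ b.copy = none ∨ a.copy = b.copy) :=
  Iff.rfl

lemma adj_ofV {s t : V} (hs : s ≠ v) (ht : t ≠ v) (h : G.Adj s t) :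
    (Double G v).Adj (.ofV s hs) (.ofV t ht) := by
  have copies_compatible : ∀ c d : Option Bool, c ≠ some true → d ≠ some true →
      c = none ∨ d = none ∨ c = d := by
    decide
  rw [adj_iff, DoubleVert.toV_ofV, DoubleVert.toV_ofV]
  exact ⟨h, copies_compatible _ _ (DoubleVert.copy_ofV_ne s hs) (DoubleVert.copy_ofV_ne t ht)⟩

variable (G v)

def swap : Double G v ≃g Double G v where
  toEquiv := DoubleVert.swap_involutive.toPerm
  map_rel_iff' {a b} := by
    change (Double G v).Adj a.swap b.swap ↔ _
    simp only [adj_iff, DoubleVert.toV_swap, DoubleVert.copy_swap, Option.map_eq_none_iff,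
      Option.map_injective Bool.not_injective |>.eq_iff]

end Double

namespace RACG

open PresentedGroup SemidirectProduct

variable {V : Type} (G : SimpleGraph V) (v : V)

def swapAut : MulAut (RACG (Double G v)) := congr (Double.swap G v)

@[simp]
lemma swapAut_of (a : DoubleVert G v) : swapAut G v (of a) = of a.swap :=
  congr_of _ a

lemma swapAut_mul_self : swapAut G v * swapAut G v = 1 :=
  MulEquiv.toMonoidHom_injective <| hom_ext fun a => by
    simp [DoubleVert.swap_involutive a]

def doubleAction : ℤˣ →* MulAut (RACG (Double G v)) :=
  unitsIntLift (swapAut G v) (swapAut_mul_self G v)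

variable {G} in
lemma conj_of_of_adj {u : V} (h : G.Adj v u) : MulAut.conj (of v : RACG G) (of u) = of u := by
  rw [MulAut.conj_apply, (commute_of_adj h).eq, mul_inv_cancel_right]

def embFun : DoubleVert G v → RACG G
  | .inl u => of u.1
  | .inr (u, false) => of u.1
  | .inr (u, true) => MulAut.conj (of v) (of u.1)

lemma embFun_ofV (u : V) (hu : u ≠ v) : embFun G v (.ofV u hu) = of u := by
  by_cases h : G.Adj v u
  · rw [DoubleVert.ofV_of_adj hu h]; rfl
  · rw [DoubleVert.ofV_of_not_adj hu h]; rfl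

def emb : RACG (Double G v) →* RACG G :=
  lift (embFun G v)
    (by
      rintro (u | ⟨u, _ | _⟩)
      · exact of_mul_self _
      · exact of_mul_self _
      · simp only [embFun, ← map_mul, of_mul_self, map_one])
    (by
      rintro (u | ⟨u, _ | _⟩) (w | ⟨w, _ | _⟩) ⟨hadj, hcopy⟩
      · exact commute_of_adj hadj
      · exact commute_of_adj hadj
      · -- `DoubleVert` is a plain `def`: goals produced by `rcases` must be restated before `rw`.
        change Commute (of u.1) (MulAut.conj (of v) (of w.1))
        rw [← conj_of_of_adj v u.2]
        exact (commute_of_adj hadj).map _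
      · exact commute_of_adj hadj
      · exact commute_of_adj hadj
      · simp [DoubleVert.copy] at hcopy
      · change Commute (MulAut.conj (of v) (of u.1)) (of w.1)
        rw [← conj_of_of_adj v w.2]
        exact (commute_of_adj hadj).map _
      · simp [DoubleVert.copy] at hcopy
      · exact (commute_of_adj hadj).map _)

@[simp]
lemma emb_of (a : DoubleVert G v) : emb G v (of a) = embFun G v a :=
  lift_of _ _ _ a

lemma embFun_swap (a : DoubleVert G v) :
    embFun G v a.swap = MulAut.conj (of v) (embFun G v a) := by
  rcases a with u | ⟨u, _ | _⟩
  · exact (conj_of_of_adj v u.2).symm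
  · rfl
  · change of u.1 = MulAut.conj (of v) (MulAut.conj (of v) (of u.1))
    rw [← MulAut.mul_apply, ← map_mul, of_mul_self, map_one, MulAut.one_apply]

lemma emb_comp_swapAut : (emb G v).comp (swapAut G v).toMonoidHom =
    (MulAut.conj (of v)).toMonoidHom.comp (emb G v) :=
  hom_ext fun a => by
    simp only [MonoidHom.comp_apply, MulEquiv.coe_toMonoidHom, swapAut_of, emb_of]
    exact embFun_swap G v a

def ofSemidirect : RACG (Double G v) ⋊[doubleAction G v] ℤˣ →* RACG G :=
  SemidirectProduct.lift (emb G v) (unitsIntLift (of v) (of_mul_self v)) fun g => by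
    rcases Int.units_eq_one_or g with rfl | rfl
    · ext x
      simp
    · simpa [doubleAction] using emb_comp_swapAut G v

open Classical in
noncomputable def toSemidirectFun (u : V) : RACG (Double G v) ⋊[doubleAction G v] ℤˣ :=
  if h : u = v then inr (-1) else inl (of (.ofV u h))

lemma toSemidirectFun_self : toSemidirectFun G v v = inr (-1) :=
  dif_pos rfl

lemma toSemidirectFun_of_ne {u : V} (h : u ≠ v) : toSemidirectFun G v u = inl (of (.ofV u h)) :=
  dif_neg h

lemma commute_toSemidirectFun {s t : V} (h : G.Adj s t) :
    Commute (toSemidirectFun G v s) (toSemidirectFun G v t) := by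
  have commute_link {u : V} (hu : u ≠ v) (hvu : G.Adj v u) :
      Commute (toSemidirectFun G v v) (toSemidirectFun G v u) := by
    rw [toSemidirectFun_self, toSemidirectFun_of_ne G v hu]
    refine commute_inr_inl_of_apply_eq ?_
    rw [doubleAction, unitsIntLift_neg_one, swapAut_of, DoubleVert.ofV_of_adj hu hvu]
    rfl
  rcases eq_or_ne s v with rfl | hs
  · exact commute_link h.ne' h
  rcases eq_or_ne t v with rfl | ht
  · exact (commute_link h.ne h.symm).symm
  rw [toSemidirectFun_of_ne G v hs, toSemidirectFun_of_ne G v ht]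
  exact (commute_of_adj (Double.adj_ofV hs ht h)).map inl

noncomputable def toSemidirect : RACG G →* RACG (Double G v) ⋊[doubleAction G v] ℤˣ :=
  lift (toSemidirectFun G v)
    (fun u => by
      by_cases h : u = v
      · rw [h, toSemidirectFun_self, ← map_mul]
        simp
      · rw [toSemidirectFun_of_ne G v h, ← map_mul, of_mul_self, map_one])
    fun _ _ => commute_toSemidirectFun G v

@[simp]
lemma toSemidirect_of (u : V) : toSemidirect G v (of u) = toSemidirectFun G v u :=
  lift_of _ _ _ u

lemma toSemidirect_embFun (a : DoubleVert G v) : toSemidirect G v (embFun G v a) = inl (of a) := by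
  rcases a with u | ⟨u, _ | _⟩
  · change toSemidirect G v (of u.1) = _
    rw [toSemidirect_of, toSemidirectFun_of_ne G v u.2.ne', DoubleVert.ofV_of_adj _ u.2]
  · change toSemidirect G v (of u.1) = _
    rw [toSemidirect_of, toSemidirectFun_of_ne G v u.2.1, DoubleVert.ofV_of_not_adj _ u.2.2]
  · change toSemidirect G v (MulAut.conj (of v) (of u.1)) = _
    rw [MulAut.conj_apply, map_mul, map_mul, map_inv, toSemidirect_of, toSemidirect_of,
      toSemidirectFun_self, toSemidirectFun_of_ne G v u.2.1, ← map_inv, ← inl_aut, doubleAction,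
      unitsIntLift_neg_one, swapAut_of, DoubleVert.ofV_of_not_adj _ u.2.2]
    rfl

noncomputable def equivSemidirect : RACG G ≃* RACG (Double G v) ⋊[doubleAction G v] ℤˣ :=
  MonoidHom.toMulEquiv (toSemidirect G v) (ofSemidirect G v)
    (hom_ext fun u => by
      rcases eq_or_ne u v with rfl | h
      · simp [toSemidirectFun_self, ofSemidirect]
      · simp [toSemidirectFun_of_ne G v h, ofSemidirect, embFun_ofV])
    (SemidirectProduct.hom_ext
      (hom_ext fun a => by simp [ofSemidirect, toSemidirect_embFun])
      (unitsInt_hom_ext <| by simp [ofSemidirect, toSemidirectFun_self]))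

theorem exists_index_two_mulEquiv_double :
    ∃ H : Subgroup (RACG G), H.index = 2 ∧ Nonempty (RACG (Double G v) ≃* H) := by
  simpa using SemidirectProduct.exists_index_eq_card_of_mulEquiv (equivSemidirect G v)

end RACG

/-- if `Γ'` is obtained from `Γ` by a sequence of `n` doubling moves, then
`W_{Γ'}` is isomorphic to a subgroup of `W_Γ` of index `2^n`; in particular to a finite-index
subgroup. -/
theorem racg_doubling_seq_index {n : ℕ} {Γ Γ' : FinGraph} (h : DoublingSeq n Γ Γ') :
    ∃ H : Subgroup (RACG Γ.graph), H.index = 2 ^ n ∧ H.FiniteIndex ∧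
      Nonempty (RACG Γ'.graph ≃* H) := by
  suffices ∃ H : Subgroup (RACG Γ.graph), H.index = 2 ^ n ∧ Nonempty (RACG Γ'.graph ≃* H) by
    obtain ⟨H, hH, e⟩ := this
    exact ⟨H, hH, ⟨by rw [hH]; positivity⟩, e⟩
  induction h with
  | refl G => exact ⟨⊤, by simp, ⟨Subgroup.topEquiv.symm⟩⟩
  | step _ move ih =>
    obtain ⟨v, ⟨iso⟩⟩ := move
    obtain ⟨B, hB, ⟨eB⟩⟩ := RACG.exists_index_two_mulEquiv_double _ v
    rw [pow_succ']
    exact Subgroup.exists_index_mul_of_mulEquiv_subgroup ih ⟨B, hB, ⟨(RACG.congr iso).trans eB⟩⟩
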